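/- arXiv:2110.06485 — 2 statements merged into one kernel-verified Lean document; each statement's English description precedes it below -/
import Mathlib

section
/- With the setup of the ARRFull estimator (each pair (v_j, v_k), j<k, independently included in E' with probability μ if a_{j,k}=1 and μρ otherwise), the sum Σᵢ wᵢ, where wᵢ = tᵢ − μρ·sᵢ, satisfies Var[Σᵢ wᵢ] ≤ μ · Σ_{1≤j<k≤n} c_{jk}², where c_{jk} = Σ_{k<i≤n} a_{i,j}·a_{i,k}. -/
open Real Finset

section Aux

variable {ι : Type*} [Fintype ι] [DecidableEq ι]

lemma sum_prod_bool (w : ι → Bool → ℝ) :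
    ∑ f : ι → Bool, ∏ i, w i (f i) = ∏ i, (w i true + w i false) := by
  rw [← Fintype.prod_sum]
  exact Finset.prod_congr rfl fun i _ => by simp

lemma sum_prod_bool_mul (w G : ι → Bool → ℝ) :
    ∑ f : ι → Bool, (∏ i, w i (f i)) * (∏ i, G i (f i)) =
      ∏ i, (w i true * G i true + w i false * G i false) := by
  have := sum_prod_bool (fun i b => w i b * G i b)
  simpa [Finset.prod_mul_distrib] using this

end Aux

/-- Ordered pairs `(j,k)` of vertices with `j < k`. -/
abbrev OPair (n : ℕ) := {p : Fin n × Fin n // p.1 < p.2}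

/-- Inclusion probability of pair `p` in the noisy edge set. -/
noncomputable def incProb (n : ℕ) (a : Fin n → Fin n → Bool) (μ ρ : ℝ)
    (p : OPair n) : ℝ :=
  if a p.1.1 p.1.2 then μ else μ * ρ

/-- Probability of a noisy edge configuration `E'` (independent inclusions). -/
noncomputable def confProb (n : ℕ) (a : Fin n → Fin n → Bool) (μ ρ : ℝ)
    (E' : OPair n → Bool) : ℝ :=
  ∏ p : OPair n, if E' p then incProb n a μ ρ p else 1 - incProb n a μ ρ p

/-- `tᵢ`: number of noisy triangles counted by user `i`. -/
def tCount (n : ℕ) (a : Fin n → Fin n → Bool) (E' : OPair n → Bool)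
    (i : Fin n) : ℝ :=
  ∑ p : OPair n,
    if p.1.2 < i ∧ a i p.1.1 = true ∧ a i p.1.2 = true ∧ E' p = true then 1 else 0

/-- `sᵢ`: number of pairs `j<k<i` of neighbors of `vᵢ`. -/
def sCount (n : ℕ) (a : Fin n → Fin n → Bool) (i : Fin n) : ℝ :=
  ∑ p : OPair n, if p.1.2 < i ∧ a i p.1.1 = true ∧ a i p.1.2 = true then 1 else 0

/-- `W(E') = Σᵢ wᵢ = Σᵢ (tᵢ − μρ sᵢ)`. -/
noncomputable def wSum (n : ℕ) (a : Fin n → Fin n → Bool) (μ ρ : ℝ)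
    (E' : OPair n → Bool) : ℝ :=
  ∑ i : Fin n, (tCount n a E' i - μ * ρ * sCount n a i)

/-- `c_{jk} = Σ_{k<i≤n} a_{i,j} a_{i,k}`. -/
def cCount (n : ℕ) (a : Fin n → Fin n → Bool) (p : OPair n) : ℝ :=
  ∑ i : Fin n, if p.1.2 < i ∧ a i p.1.1 = true ∧ a i p.1.2 = true then 1 else 0

/-- Variance bound for the `ARRFull` statistic:
`Var[Σᵢ wᵢ] ≤ μ Σ_{j<k} c_{jk}²`. -/
theorem arrfull_variance_le (n : ℕ) (a : Fin n → Fin n → Bool)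
    (hsymm : ∀ i j, a i j = a j i)
    (ε₁ μ ρ : ℝ) (hε₁ : 0 ≤ ε₁) (hρ : ρ = Real.exp (-ε₁))
    (hμ0 : 0 < μ) (hμ1 : μ < 1) :
    (∑ E' : OPair n → Bool,
        confProb n a μ ρ E' *
          (wSum n a μ ρ E'
            - ∑ E'' : OPair n → Bool, confProb n a μ ρ E'' * wSum n a μ ρ E'') ^ 2)
      ≤ μ * ∑ p : OPair n, (cCount n a p) ^ 2 := by
  classical
  set q : OPair n → ℝ := incProb n a μ ρ with hq
  set c : OPair n → ℝ := cCount n a with hc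
  set B : Bool → ℝ := fun b => if b then 1 else 0 with hB
  set w : OPair n → Bool → ℝ := fun p b => if b then q p else 1 - q p with hwdef
  have hρ0 : 0 < ρ := hρ ▸ Real.exp_pos _
  have hρ1 : ρ ≤ 1 := by
    rw [hρ]; exact Real.exp_le_one_iff.mpr (by linarith)
  have hq0 : ∀ p, 0 ≤ q p := by
    intro p; simp only [hq, incProb]; split
    · exact hμ0.le
    · positivity
  have hqμ : ∀ p, q p ≤ μ := by
    intro p; simp only [hq, incProb]; split
    · exact le_refl μ
    · nlinarith
  have hP : ∀ f : OPair n → Bool, confProb n a μ ρ f = ∏ p, w p (f p) := by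
    intro f; rfl
  -- key expectation formula
  have key : ∀ G : OPair n → Bool → ℝ,
      ∑ f : OPair n → Bool, confProb n a μ ρ f * ∏ p, G p (f p)
      = ∏ p, (q p * G p true + (1 - q p) * G p false) := by
    intro G
    have h := sum_prod_bool_mul w G
    simp only [hP]
    simpa [hwdef] using h
  -- expansion of wSum
  have hw : ∀ f : OPair n → Bool,
      wSum n a μ ρ f = ∑ p : OPair n, c p * (B (f p) - μ * ρ) := by
    intro f
    simp only [wSum, tCount, sCount, hc, cCount]
    have step : ∀ i : Fin n, ((∑ p : OPair n,
        if p.1.2 < i ∧ a i p.1.1 = true ∧ a i p.1.2 = true ∧ f p = true then (1:ℝ) else 0)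
        - μ * ρ * ∑ p : OPair n,
        if p.1.2 < i ∧ a i p.1.1 = true ∧ a i p.1.2 = true then (1:ℝ) else 0)
      = ∑ p : OPair n,
        ((if p.1.2 < i ∧ a i p.1.1 = true ∧ a i p.1.2 = true ∧ f p = true then (1:ℝ) else 0)
          - μ * ρ * (if p.1.2 < i ∧ a i p.1.1 = true ∧ a i p.1.2 = true then (1:ℝ) else 0)) := by
      intro i
      rw [Finset.mul_sum, ← Finset.sum_sub_distrib]
    rw [Finset.sum_congr rfl fun i _ => step i, Finset.sum_comm]
    refine Finset.sum_congr rfl fun p _ => ?_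
    rw [Finset.sum_mul]
    refine Finset.sum_congr rfl fun i _ => ?_
    by_cases hf : f p = true <;>
      by_cases hC : p.1.2 < i ∧ a i p.1.1 = true ∧ a i p.1.2 = true <;>
        simp [hf, hC, hB] <;> ring
  -- expectation of wSum
  have hEW : (∑ f : OPair n → Bool, confProb n a μ ρ f * wSum n a μ ρ f)
      = ∑ p : OPair n, c p * (q p - μ * ρ) := by
    have : ∀ f : OPair n → Bool, confProb n a μ ρ f * wSum n a μ ρ f
        = ∑ p : OPair n, c p * (confProb n a μ ρ f *
            ∏ r : OPair n, (if r = p then B (f r) - μ * ρ else 1)) := by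
      intro f
      rw [hw f, Finset.mul_sum]
      refine Finset.sum_congr rfl fun p _ => ?_
      rw [Finset.prod_ite_eq' Finset.univ p (fun r => B (f r) - μ * ρ)]
      simp; ring
    rw [Finset.sum_congr rfl fun f _ => this f, Finset.sum_comm]
    refine Finset.sum_congr rfl fun p _ => ?_
    rw [← Finset.mul_sum, key (fun r b => if r = p then B b - μ * ρ else 1)]
    congr 1
    rw [Finset.prod_eq_single p
      (fun r _ hr => by simp [hr]) (fun h => absurd (Finset.mem_univ p) h)]
    simp [hB]; ring
  -- covariance computation
  have hcov : ∀ p r : OPair n,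
      (∑ f : OPair n → Bool, confProb n a μ ρ f * ((B (f p) - q p) * (B (f r) - q r)))
      = if p = r then q p * (1 - q p) else 0 := by
    intro p r
    have hGe : ∀ f : OPair n → Bool,
        (B (f p) - q p) * (B (f r) - q r)
        = ∏ i : OPair n, ((if i = p then B (f i) - q p else 1) *
            (if i = r then B (f i) - q r else 1)) := by
      intro f
      rw [Finset.prod_mul_distrib,
        Finset.prod_ite_eq' Finset.univ p (fun i => B (f i) - q p),
        Finset.prod_ite_eq' Finset.univ r (fun i => B (f i) - q r)]
      simp
    rw [Finset.sum_congr rfl fun f _ => by rw [hGe f],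
      key (fun i b => (if i = p then B b - q p else 1) * (if i = r then B b - q r else 1))]
    by_cases hpr : p = r
    · subst hpr
      simp only [if_pos rfl]
      rw [Finset.prod_eq_single p
        (fun i _ hi => by simp [hi]) (fun h => absurd (Finset.mem_univ p) h)]
      simp [hB]; ring
    · rw [if_neg hpr]
      refine Finset.prod_eq_zero (Finset.mem_univ p) ?_
      simp [hB, hpr]
      ring
  -- put it together
  have hdev : ∀ f : OPair n → Bool,
      wSum n a μ ρ f - (∑ E'' : OPair n → Bool, confProb n a μ ρ E'' * wSum n a μ ρ E'')
      = ∑ p : OPair n, c p * (B (f p) - q p) := by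
    intro f
    rw [hw f, hEW, ← Finset.sum_sub_distrib]
    exact Finset.sum_congr rfl fun p _ => by ring
  calc (∑ f : OPair n → Bool,
        confProb n a μ ρ f *
          (wSum n a μ ρ f
            - ∑ E'' : OPair n → Bool, confProb n a μ ρ E'' * wSum n a μ ρ E'') ^ 2)
      = ∑ p : OPair n, ∑ r : OPair n, c p * c r *
          (∑ f : OPair n → Bool, confProb n a μ ρ f *
            ((B (f p) - q p) * (B (f r) - q r))) := by
        have expand : ∀ f : OPair n → Bool,
            confProb n a μ ρ f * (wSum n a μ ρ f
              - ∑ E'' : OPair n → Bool, confProb n a μ ρ E'' * wSum n a μ ρ E'') ^ 2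
            = ∑ p : OPair n, ∑ r : OPair n, c p * c r *
                (confProb n a μ ρ f * ((B (f p) - q p) * (B (f r) - q r))) := by
          intro f
          rw [hdev f, sq, Finset.sum_mul_sum, Finset.mul_sum]
          refine Finset.sum_congr rfl fun p _ => ?_
          rw [Finset.mul_sum]
          exact Finset.sum_congr rfl fun r _ => by ring
        rw [Finset.sum_congr rfl fun f _ => expand f, Finset.sum_comm]
        refine Finset.sum_congr rfl fun p _ => ?_
        rw [Finset.sum_comm]
        exact Finset.sum_congr rfl fun r _ => (Finset.mul_sum _ _ _).symm
    _ = ∑ p : OPair n, c p ^ 2 * (q p * (1 - q p)) := by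
        refine Finset.sum_congr rfl fun p _ => ?_
        rw [Finset.sum_congr rfl fun r _ => by rw [hcov p r],
          Finset.sum_eq_single p (fun r _ hr => by simp [Ne.symm hr])
            (fun h => absurd (Finset.mem_univ p) h)]
        rw [if_pos rfl]
        ring
    _ ≤ ∑ p : OPair n, c p ^ 2 * μ := by
        refine Finset.sum_le_sum fun p _ => ?_
        have := hq0 p; have := hqμ p
        nlinarith [sq_nonneg (c p), sq_nonneg (q p)]
    _ = μ * ∑ p : OPair n, (cCount n a p) ^ 2 := by
        rw [Finset.mul_sum]
        exact Finset.sum_congr rfl fun p _ => by rw [hc]; ring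
end

section
/- In the ARROneNS setting, Var[Σᵢ wᵢ] ≤ 2·C₄(G)·μ³ + 6·S₃(G)·μ³ + S₂(G)·μ², where wᵢ = tᵢ − μ²ρ·sᵢ with tᵢ = Σ_{j<k<i} a_{i,j}a_{i,k}·1[(v_j,v_k) ∈ E']·1[(v_i,v_k) ∈ E'], the pair-inclusion events in E' are independent with probability at most μ each, C₄(G) is the number of 4-cycles, S₃(G) the number of 3-stars, and S₂(G) the number of 2-stars of G. -/
open Real Finset

/-- Membership of the unordered pair `{j,k}` in the noisy edge set `E'`. -/
def memE {n : ℕ} (E' : OPair n → Bool) (j k : Fin n) : Bool :=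
  if h : j < k then E' ⟨(j, k), h⟩
  else if h' : k < j then E' ⟨(k, j), h'⟩ else false

/-- `tᵢ` for `ARROneNS`. -/
def tCountOne (n : ℕ) (a : Fin n → Fin n → Bool) (E' : OPair n → Bool)
    (i : Fin n) : ℝ :=
  ∑ p : OPair n,
    if p.1.2 < i ∧ a i p.1.1 = true ∧ a i p.1.2 = true ∧
        memE E' p.1.1 p.1.2 = true ∧ memE E' p.1.2 i = true then 1 else 0

/-- `Σᵢ wᵢ` for `ARROneNS`, with `wᵢ = tᵢ − μ²ρ sᵢ`. -/
noncomputable def wSumOne (n : ℕ) (a : Fin n → Fin n → Bool) (μ ρ : ℝ)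
    (E' : OPair n → Bool) : ℝ :=
  ∑ i : Fin n, (tCountOne n a E' i - μ ^ 2 * ρ * sCount n a i)

/-- Degree of vertex `v`. -/
def degCount (n : ℕ) (a : Fin n → Fin n → Bool) (v : Fin n) : ℕ :=
  (Finset.univ.filter (fun u : Fin n => a v u = true)).card

/-- Number of `k`-stars. -/
def kStars (n : ℕ) (a : Fin n → Fin n → Bool) (k : ℕ) : ℕ :=
  ∑ v : Fin n, Nat.choose (degCount n a v) k

/-- Number of 4-cycles (canonical representative count). -/
def fourCycles (n : ℕ) (a : Fin n → Fin n → Bool) : ℕ :=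
  (Finset.univ.filter (fun t : Fin n × Fin n × Fin n × Fin n =>
    t.1 < t.2.1 ∧ t.2.1 < t.2.2.2 ∧ t.1 < t.2.2.1 ∧
    t.2.1 ≠ t.2.2.1 ∧ t.2.2.2 ≠ t.2.2.1 ∧
    a t.1 t.2.1 = true ∧ a t.2.1 t.2.2.1 = true ∧
    a t.2.2.1 t.2.2.2 = true ∧ a t.2.2.2 t.1 = true)).card

/-!
The centred sum `Σᵢ wᵢ` is, up to a constant, the number `N` of wedges `j – i – k` (`j < k < i`)
whose two edges `{j,k}` and `{k,i}` both lie in `E'`. Since the edges are independent, the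
covariance of two wedge indicators is `∏_{e ∈ S ∪ T} pₑ - ∏_{e ∈ S} pₑ ∏_{e ∈ T} pₑ` for their
edge sets `S`, `T`: it vanishes when they are disjoint and is at most `μ ^ #(S ∪ T)` otherwise.
Hence `Var N ≤ μ² · #wedges + μ³ · #(ordered pairs of distinct wedges sharing an edge)`. The
wedges are counted by 2-stars, and a pair sharing an edge is either two wedges on the same base
(a 4-cycle, each counted twice) or three neighbours of one vertex (a 3-star, counted at most four
times in total).
-/

theorem Finset.lt_card_union_of_card_eq {α : Type*} [DecidableEq α] {S T : Finset α}
    (hcard : #S = #T) (hne : S ≠ T) : #S < #(S ∪ T) := by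
  refine card_lt_card (ssubset_iff_subset_ne.2 ⟨subset_union_left, fun h => hne ?_⟩)
  exact (eq_of_subset_of_card_le (h ▸ subset_union_right) hcard.le).symm

theorem Finset.card_le_two_mul_card_of_injOn {α β : Type*} {s : Finset α} {t : Finset β}
    (f : α → β) (g : α → Bool) (hf : ∀ x ∈ s, f x ∈ t)
    (hinj : Set.InjOn (fun x => (f x, g x)) s) : #s ≤ 2 * #t := by
  calc #s ≤ #(t ×ˢ (univ : Finset Bool)) :=
        card_le_card_of_injOn _ (fun x hx => mem_product.2 ⟨hf x hx, mem_univ _⟩) hinj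
    _ = 2 * #t := by simp [mul_comm]

theorem eq_and_eq_of_min_eq_of_max_eq {α : Type*} [LinearOrder α] {a b c d : α}
    (hmin : min a b = min c d) (hmax : max a b = max c d) (hlt : a < b ↔ c < d) :
    a = c ∧ b = d := by
  simp only [min_def, max_def] at hmin hmax
  split_ifs at hmin hmax <;> grind

theorem eq_and_eq_of_pair_eq_pair {α : Type*} [LinearOrder α] {a b c d : α} (hab : a < b)
    (hcd : c < d) (h : ({a, b} : Finset α) = {c, d}) : a = c ∧ b = d := by
  have ha : a ∈ ({c, d} : Finset α) := h ▸ by simp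
  have hb : b ∈ ({c, d} : Finset α) := h ▸ by simp
  have hc : c ∈ ({a, b} : Finset α) := h.symm ▸ by simp
  simp only [mem_insert, mem_singleton] at ha hb hc
  grind

theorem eq_and_eq_and_eq_of_triple_eq_triple {α : Type*} [LinearOrder α] {a b c a' b' c' : α}
    (hab : a < b) (hbc : b < c) (hab' : a' < b') (hbc' : b' < c')
    (h : ({a, b, c} : Finset α) = {a', b', c'}) : a = a' ∧ b = b' ∧ c = c' := by
  have ha : a ∈ ({a', b', c'} : Finset α) := h ▸ by simp
  have hb : b ∈ ({a', b', c'} : Finset α) := h ▸ by simp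
  have hc : c ∈ ({a', b', c'} : Finset α) := h ▸ by simp
  have ha' : a' ∈ ({a, b, c} : Finset α) := h.symm ▸ by simp
  have hb' : b' ∈ ({a, b, c} : Finset α) := h.symm ▸ by simp
  have hc' : c' ∈ ({a, b, c} : Finset α) := h.symm ▸ by simp
  simp only [mem_insert, mem_singleton] at ha hb hc ha' hb' hc'
  grind

theorem sum_mul_sub_sum_mul_sq {Ω : Type*} [Fintype Ω] (P g : Ω → ℝ) (hP : ∑ x, P x = 1)
    (c : ℝ) :
    ∑ x, P x * ((g x - c) - ∑ y, P y * (g y - c)) ^ 2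
      = ∑ x, P x * g x ^ 2 - (∑ x, P x * g x) ^ 2 := by
  have hmean : ∑ y, P y * (g y - c) = ∑ y, P y * g y - c := by
    simp_rw [mul_sub, sum_sub_distrib, ← sum_mul, hP, one_mul]
  rw [hmean]
  set m := ∑ y, P y * g y
  calc ∑ x, P x * ((g x - c) - (m - c)) ^ 2
      = ∑ x, P x * g x ^ 2 - 2 * m * ∑ x, P x * g x + m ^ 2 * ∑ x, P x := by
        simp_rw [mul_sum, ← sum_sub_distrib, ← sum_add_distrib]
        exact sum_congr rfl fun x _ => by ring
    _ = _ := by rw [hP]; ring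

section Bernoulli

variable {ι κ : Type*} [Fintype ι] [DecidableEq ι]

noncomputable def bernoulliWeight (p : ι → ℝ) (x : ι → Bool) : ℝ :=
  ∏ i, if x i then p i else 1 - p i

theorem sum_bernoulliWeight_mul_ite_forall (p : ι → ℝ) (S : Finset ι) :
    ∑ x, bernoulliWeight p x * (if ∀ i ∈ S, x i = true then 1 else 0) = ∏ i ∈ S, p i := by
  have hind : ∀ x : ι → Bool, (if ∀ i ∈ S, x i = true then (1 : ℝ) else 0)
      = ∏ i, if i ∈ S then (if x i then 1 else 0) else 1 := by
    intro x
    rw [prod_ite_mem, univ_inter, prod_boole]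
    congr
  simp_rw [hind, bernoulliWeight, ← prod_mul_distrib]
  rw [← Fintype.prod_sum fun (i : ι) (b : Bool) => (if b then p i else 1 - p i) *
    (if i ∈ S then (if b then 1 else 0) else 1 : ℝ), ← univ_inter S, ← prod_ite_mem]
  refine prod_congr rfl fun i _ => ?_
  by_cases hi : i ∈ S <;> simp [hi]

theorem sum_bernoulliWeight (p : ι → ℝ) : ∑ x, bernoulliWeight p x = 1 := by
  simpa using sum_bernoulliWeight_mul_ite_forall p ∅

noncomputable def presentCount (A : Finset κ) (S : κ → Finset ι) (x : ι → Bool) : ℝ :=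
  ∑ α ∈ A, if ∀ i ∈ S α, x i = true then 1 else 0

theorem sum_bernoulliWeight_mul_presentCount (p : ι → ℝ) (A : Finset κ) (S : κ → Finset ι) :
    ∑ x, bernoulliWeight p x * presentCount A S x = ∑ α ∈ A, ∏ i ∈ S α, p i := by
  simp_rw [presentCount, mul_sum]
  rw [sum_comm]
  exact sum_congr rfl fun α _ => sum_bernoulliWeight_mul_ite_forall p (S α)

theorem sum_bernoulliWeight_mul_presentCount_sq (p : ι → ℝ) (A : Finset κ)
    (S : κ → Finset ι) :
    ∑ x, bernoulliWeight p x * presentCount A S x ^ 2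
      = ∑ α ∈ A, ∑ β ∈ A, ∏ i ∈ S α ∪ S β, p i := by
  have hsq : ∀ x : ι → Bool, presentCount A S x ^ 2
      = ∑ α ∈ A, ∑ β ∈ A, if ∀ i ∈ S α ∪ S β, x i = true then 1 else 0 := by
    intro x
    simp_rw [presentCount, sq, sum_mul_sum, ite_zero_mul_ite_zero, one_mul, forall_mem_union]
  simp_rw [hsq, mul_sum]
  rw [sum_comm]
  refine sum_congr rfl fun α _ => ?_
  rw [sum_comm]
  exact sum_congr rfl fun β _ => sum_bernoulliWeight_mul_ite_forall p (S α ∪ S β)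

theorem variance_presentCount_sub (p : ι → ℝ) (A : Finset κ) (S : κ → Finset ι) (c : ℝ) :
    ∑ x, bernoulliWeight p x *
        ((presentCount A S x - c) - ∑ y, bernoulliWeight p y * (presentCount A S y - c)) ^ 2
      = ∑ α ∈ A, ∑ β ∈ A,
          (∏ i ∈ S α ∪ S β, p i - (∏ i ∈ S α, p i) * ∏ i ∈ S β, p i) := by
  rw [sum_mul_sub_sum_mul_sq _ _ (sum_bernoulliWeight p), sum_bernoulliWeight_mul_presentCount_sq,
    sum_bernoulliWeight_mul_presentCount, sq, sum_mul_sum]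
  simp_rw [← sum_sub_distrib]

end Bernoulli

section Covariance

variable {ι κ : Type*} [DecidableEq ι] {p : ι → ℝ} {μ : ℝ}

theorem prod_union_sub_prod_mul_prod_of_disjoint {S T : Finset ι} (h : Disjoint S T) :
    ∏ i ∈ S ∪ T, p i - (∏ i ∈ S, p i) * ∏ i ∈ T, p i = 0 := by
  rw [prod_union h, sub_self]

theorem prod_union_sub_prod_mul_prod_le_pow (hp0 : ∀ i, 0 ≤ p i) (hpμ : ∀ i, p i ≤ μ)
    (hμ0 : 0 ≤ μ) (hμ1 : μ ≤ 1) {S T : Finset ι} {k : ℕ} (hk : k ≤ #(S ∪ T)) :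
    ∏ i ∈ S ∪ T, p i - (∏ i ∈ S, p i) * ∏ i ∈ T, p i ≤ μ ^ k := by
  have hST : 0 ≤ (∏ i ∈ S, p i) * ∏ i ∈ T, p i :=
    mul_nonneg (prod_nonneg fun i _ => hp0 i) (prod_nonneg fun i _ => hp0 i)
  calc ∏ i ∈ S ∪ T, p i - (∏ i ∈ S, p i) * ∏ i ∈ T, p i
      ≤ ∏ i ∈ S ∪ T, p i := sub_le_self _ hST
    _ ≤ μ ^ #(S ∪ T) :=
        (prod_le_prod (fun i _ => hp0 i) fun i _ => hpμ i).trans_eq (prod_const μ)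
    _ ≤ μ ^ k := pow_le_pow_of_le_one hμ0 hμ1 hk

theorem sum_sum_prod_union_sub_le (hp0 : ∀ i, 0 ≤ p i) (hpμ : ∀ i, p i ≤ μ)
    (hμ0 : 0 ≤ μ) (hμ1 : μ ≤ 1) {A : Finset κ} {S : κ → Finset ι}
    (hS : ∀ α ∈ A, #(S α) = 2) (hinj : Set.InjOn S A) :
    ∑ α ∈ A, ∑ β ∈ A, (∏ i ∈ S α ∪ S β, p i - (∏ i ∈ S α, p i) * ∏ i ∈ S β, p i)
      ≤ #A * μ ^ 2 + #{x ∈ A.offDiag | ¬Disjoint (S x.1) (S x.2)} * μ ^ 3 := by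
  set cov : κ × κ → ℝ := fun x =>
    ∏ i ∈ S x.1 ∪ S x.2, p i - (∏ i ∈ S x.1, p i) * ∏ i ∈ S x.2, p i
  have hsplit : ∑ α ∈ A, ∑ β ∈ A, cov (α, β)
      = ∑ α ∈ A, cov (α, α) + ∑ x ∈ A.offDiag, cov x := by
    classical
    rw [← sum_product' (f := fun α β => cov (α, β)), ← diag_union_offDiag,
      sum_union (disjoint_diag_offDiag _), diag, sum_map]
    rfl
  have hdiag : ∑ α ∈ A, cov (α, α) ≤ #A * μ ^ 2 := by
    rw [← nsmul_eq_mul, ← sum_const]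
    refine sum_le_sum fun α hα => prod_union_sub_prod_mul_prod_le_pow hp0 hpμ hμ0 hμ1 ?_
    rw [union_self, hS α hα]
  have hoff : ∑ x ∈ A.offDiag, cov x
      ≤ #{x ∈ A.offDiag | ¬Disjoint (S x.1) (S x.2)} * μ ^ 3 := by
    rw [← nsmul_eq_mul, ← sum_const, sum_filter]
    refine sum_le_sum fun x hx => ?_
    obtain ⟨h1, h2, hne⟩ := mem_offDiag.1 hx
    by_cases hdisj : Disjoint (S x.1) (S x.2)
    · rw [if_neg (not_not.2 hdisj)]
      exact (prod_union_sub_prod_mul_prod_of_disjoint hdisj).le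
    · rw [if_pos hdisj]
      refine prod_union_sub_prod_mul_prod_le_pow hp0 hpμ hμ0 hμ1 ?_
      have := lt_card_union_of_card_eq ((hS _ h1).trans (hS _ h2).symm) (hinj.ne h1 h2 hne)
      rwa [hS _ h1] at this
  exact hsplit ▸ add_le_add hdiag hoff

end Covariance

namespace ARROneNS

variable {n : ℕ} {a : Fin n → Fin n → Bool}

theorem incProb_nonneg {μ ρ : ℝ} (hμ0 : 0 ≤ μ) (hρ0 : 0 ≤ ρ) (e : OPair n) :
    0 ≤ incProb n a μ ρ e := by
  unfold incProb
  split_ifs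
  exacts [hμ0, mul_nonneg hμ0 hρ0]

theorem incProb_le {μ ρ : ℝ} (hμ0 : 0 ≤ μ) (hρ1 : ρ ≤ 1) (e : OPair n) :
    incProb n a μ ρ e ≤ μ := by
  unfold incProb
  split_ifs
  exacts [le_rfl, mul_le_of_le_one_right hμ0 hρ1]

/-- `(i, j, k)` encodes the wedge `j – i – k` with `j < k < i`; its base is `{j, k}` and its
spoke `{k, i}`. -/
def wedges (n : ℕ) (a : Fin n → Fin n → Bool) : Finset (Fin n × Fin n × Fin n) :=
  univ.filter fun (i, j, k) => j < k ∧ k < i ∧ a i j = true ∧ a i k = true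

def wedgeEdges : Fin n × Fin n × Fin n → Finset (OPair n)
  | (i, j, k) => {e | e.1 = (j, k) ∨ e.1 = (k, i)}

@[simp] theorem mem_wedges {i j k : Fin n} :
    (i, j, k) ∈ wedges n a ↔ j < k ∧ k < i ∧ a i j = true ∧ a i k = true := by
  simp [wedges]

@[simp] theorem mem_wedgeEdges {i j k : Fin n} {e : OPair n} :
    e ∈ wedgeEdges (i, j, k) ↔ e.1 = (j, k) ∨ e.1 = (k, i) := by
  simp [wedgeEdges]

theorem wedgeEdges_eq_pair {i j k : Fin n} (hjk : j < k) (hki : k < i) :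
    wedgeEdges (i, j, k) = {⟨(j, k), hjk⟩, ⟨(k, i), hki⟩} := by
  ext e
  simp [Subtype.ext_iff]

theorem forall_mem_wedgeEdges_iff {i j k : Fin n} (hjk : j < k) (hki : k < i)
    {E' : OPair n → Bool} :
    (∀ e ∈ wedgeEdges (i, j, k), E' e = true) ↔ memE E' j k = true ∧ memE E' k i = true := by
  rw [wedgeEdges_eq_pair hjk hki]
  simp [memE, hjk, hki]

theorem sum_opair {M : Type*} [AddCommMonoid M] (f : Fin n × Fin n → M) :
    ∑ p : OPair n, f p.1 = ∑ q : Fin n × Fin n, if q.1 < q.2 then f q else 0 := by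
  rw [← sum_filter]
  exact (sum_subtype _ (fun _ => mem_filter_univ _) f).symm

theorem sum_sCount : ∑ i, sCount n a i = #(wedges n a) := by
  rw [card_eq_sum_ones, wedges, sum_filter]
  simp only [sCount, fun i => sum_opair fun q =>
      if q.2 < i ∧ a i q.1 = true ∧ a i q.2 = true then (1 : ℝ) else 0,
    Fintype.sum_prod_type]
  push_cast
  refine sum_congr rfl fun i _ => sum_congr rfl fun j _ => sum_congr rfl fun k _ => ?_
  by_cases hjk : j < k <;> simp [hjk]

theorem sum_tCountOne (E' : OPair n → Bool) :
    ∑ i, tCountOne n a E' i = presentCount (wedges n a) wedgeEdges E' := by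
  rw [presentCount, wedges, sum_filter]
  simp only [tCountOne, fun i => sum_opair fun q =>
      if q.2 < i ∧ a i q.1 = true ∧ a i q.2 = true ∧
        memE E' q.1 q.2 = true ∧ memE E' q.2 i = true then (1 : ℝ) else 0,
    Fintype.sum_prod_type]
  refine sum_congr rfl fun i _ => sum_congr rfl fun j _ => sum_congr rfl fun k _ => ?_
  by_cases hjk : j < k
  · by_cases hki : k < i
    · simp only [forall_mem_wedgeEdges_iff hjk hki]
      simp [hjk, hki, ite_and]
    · simp [hjk, hki]
  · simp [hjk]

theorem wSumOne_eq (μ ρ : ℝ) (E' : OPair n → Bool) :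
    wSumOne n a μ ρ E'
      = presentCount (wedges n a) wedgeEdges E' - μ ^ 2 * ρ * #(wedges n a) := by
  rw [wSumOne, sum_sub_distrib, ← mul_sum, sum_tCountOne, sum_sCount]

theorem card_wedgeEdges {t : Fin n × Fin n × Fin n} (ht : t ∈ wedges n a) :
    #(wedgeEdges t) = 2 := by
  obtain ⟨i, j, k⟩ := t
  obtain ⟨hjk, hki, -⟩ := mem_wedges.1 ht
  rw [wedgeEdges_eq_pair hjk hki, card_pair]
  simp [hjk.ne]

theorem wedgeEdges_injOn :
    Set.InjOn wedgeEdges (wedges n a : Set (Fin n × Fin n × Fin n)) := by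
  rintro ⟨i, j, k⟩ ht ⟨i', j', k'⟩ ht' h
  obtain ⟨hjk, hki, -⟩ := mem_wedges.1 ht
  obtain ⟨hjk', hki', -⟩ := mem_wedges.1 ht'
  have h₁ : (⟨(j, k), hjk⟩ : OPair n) ∈ wedgeEdges (i', j', k') := h ▸ by simp
  have h₂ : (⟨(k, i), hki⟩ : OPair n) ∈ wedgeEdges (i', j', k') := h ▸ by simp
  simp only [mem_wedgeEdges, Prod.mk.injEq] at h₁ h₂
  grind

theorem wedgeEdges_overlap_cases {i j k i' j' k' : Fin n}
    (h : ¬Disjoint (wedgeEdges (i, j, k)) (wedgeEdges (i', j', k'))) :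
    (j = j' ∧ k = k') ∨ (k = k' ∧ i = i') ∨ (j = k' ∧ k = i') ∨ (k = j' ∧ i = k') := by
  obtain ⟨e, he, he'⟩ := not_disjoint_iff.1 h
  simp only [mem_wedgeEdges] at he he'
  grind

def starSets (n : ℕ) (a : Fin n → Fin n → Bool) (k : ℕ) :
    Finset (Σ _ : Fin n, Finset (Fin n)) :=
  univ.sigma fun v => (univ.filter (a v ·)).powersetCard k

theorem card_starSets (k : ℕ) : #(starSets n a k) = kStars n a k := by
  simp [starSets, kStars, degCount]

def starTriples (n : ℕ) (a : Fin n → Fin n → Bool) : Finset (Fin n × Fin n × Fin n × Fin n) :=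
  univ.filter fun (v, x, y, z) => x < y ∧ y < z ∧ a v x = true ∧ a v y = true ∧ a v z = true

@[simp] theorem mem_starTriples {v x y z : Fin n} :
    (v, x, y, z) ∈ starTriples n a ↔
      x < y ∧ y < z ∧ a v x = true ∧ a v y = true ∧ a v z = true := by
  simp [starTriples]

theorem card_wedges_le : #(wedges n a) ≤ kStars n a 2 := by
  rw [← card_starSets]
  refine card_le_card_of_injOn (fun t => ⟨t.1, {t.2.1, t.2.2}⟩) ?_ ?_
  · rintro ⟨i, j, k⟩ ht
    obtain ⟨hjk, -, hij, hik⟩ := mem_wedges.1 ht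
    simp [starSets, insert_subset_iff, card_pair hjk.ne, hij, hik]
  · rintro ⟨i, j, k⟩ ht ⟨i', j', k'⟩ ht' h
    simp only [Sigma.mk.injEq, heq_eq_eq] at h
    obtain ⟨rfl, hset⟩ := h
    obtain ⟨rfl, rfl⟩ := eq_and_eq_of_pair_eq_pair (mem_wedges.1 ht).1 (mem_wedges.1 ht').1 hset
    rfl

theorem card_starTriples_le : #(starTriples n a) ≤ kStars n a 3 := by
  rw [← card_starSets]
  refine card_le_card_of_injOn (fun t => ⟨t.1, {t.2.1, t.2.2.1, t.2.2.2}⟩) ?_ ?_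
  · rintro ⟨v, x, y, z⟩ ht
    obtain ⟨hxy, hyz, hx, hy, hz⟩ := mem_starTriples.1 ht
    simp [starSets, insert_subset_iff, hx, hy, hz, card_insert_of_notMem, hxy.ne, hyz.ne,
      (hxy.trans hyz).ne]
  · rintro ⟨v, x, y, z⟩ ht ⟨v', x', y', z'⟩ ht' h
    simp only [Sigma.mk.injEq, heq_eq_eq] at h
    obtain ⟨rfl, hset⟩ := h
    obtain ⟨hxy, hyz, -⟩ := mem_starTriples.1 ht
    obtain ⟨hxy', hyz', -⟩ := mem_starTriples.1 ht'
    obtain ⟨rfl, rfl, rfl⟩ := eq_and_eq_and_eq_of_triple_eq_triple hxy hyz hxy' hyz' hset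
    rfl

/-- Two wedges with the common base `{j, k}` and apexes `i ≠ i'` form the 4-cycle
`j – i – k – i'`; its canonical representative forgets which apex came first. -/
theorem card_sameBase_le (hsymm : ∀ i j, a i j = a j i) :
    #{x ∈ wedges n a ×ˢ wedges n a |
        let ((i, j, k), (i', j', k')) := x; j = j' ∧ k = k' ∧ i ≠ i'} ≤ 2 * fourCycles n a := by
  unfold fourCycles
  refine card_le_two_mul_card_of_injOn (fun ((i, j, k), (i', _, _)) => (j, min i i', k, max i i'))
    (fun ((i, _, _), (i', _, _)) => decide (i < i')) ?_ ?_
  · rintro ⟨⟨i, j, k⟩, ⟨i', j', k'⟩⟩ hx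
    simp only [mem_filter, mem_product, mem_wedges] at hx
    obtain ⟨⟨⟨hjk, hki, hij, hik⟩, ⟨-, hki', hij', hik'⟩⟩, rfl, rfl, hne⟩ := hx
    simp only [mem_filter, mem_univ, true_and]
    refine ⟨lt_min (hjk.trans hki) (hjk.trans hki'), min_lt_max.2 hne, hjk,
      (lt_min hki hki').ne', (lt_max_of_lt_left hki).ne', ?_, ?_, ?_, ?_⟩
    · exact min_rec' (a j ·) (hsymm i j ▸ hij) (hsymm i' j ▸ hij')
    · exact min_rec' (a · k) hik hik'
    · exact max_rec' (a k ·) (hsymm i k ▸ hik) (hsymm i' k ▸ hik')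
    · exact max_rec' (a · j) hij hij'
  · rintro ⟨⟨i, j, k⟩, ⟨i', j', k'⟩⟩ hx ⟨⟨l, m, o⟩, ⟨l', m', o'⟩⟩ hy h
    simp only [mem_coe, mem_filter] at hx hy
    simp only [Prod.mk.injEq, decide_eq_decide] at h
    obtain ⟨⟨rfl, hmin, rfl, hmax⟩, hlt⟩ := h
    obtain ⟨rfl, rfl⟩ := eq_and_eq_of_min_eq_of_max_eq hmin hmax hlt
    obtain ⟨-, rfl, rfl, -⟩ := hx
    obtain ⟨-, rfl, rfl, -⟩ := hy
    rfl

theorem card_sameSpoke_le :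
    #{x ∈ wedges n a ×ˢ wedges n a |
        let ((i, j, k), (i', j', k')) := x; k = k' ∧ i = i' ∧ j ≠ j'} ≤ 2 * kStars n a 3 := by
  refine (card_le_two_mul_card_of_injOn (t := starTriples n a)
    (fun ((i, j, k), (_, j', _)) => (i, min j j', max j j', k))
    (fun ((_, j, _), (_, j', _)) => decide (j < j')) ?_ ?_).trans
    (Nat.mul_le_mul_left 2 card_starTriples_le)
  · rintro ⟨⟨i, j, k⟩, ⟨i', j', k'⟩⟩ hx
    simp only [mem_filter, mem_product, mem_wedges] at hx
    obtain ⟨⟨⟨hjk, -, hij, hik⟩, ⟨hjk', -, hij', -⟩⟩, rfl, rfl, hne⟩ := hx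
    exact mem_starTriples.2 ⟨min_lt_max.2 hne, max_lt hjk hjk', min_rec' (a i ·) hij hij',
      max_rec' (a i ·) hij hij', hik⟩
  · rintro ⟨⟨i, j, k⟩, ⟨i', j', k'⟩⟩ hx ⟨⟨l, m, o⟩, ⟨l', m', o'⟩⟩ hy h
    simp only [mem_coe, mem_filter] at hx hy
    simp only [Prod.mk.injEq, decide_eq_decide] at h
    obtain ⟨⟨rfl, hmin, hmax, rfl⟩, hlt⟩ := h
    obtain ⟨rfl, rfl⟩ := eq_and_eq_of_min_eq_of_max_eq hmin hmax hlt
    obtain ⟨-, rfl, rfl, -⟩ := hx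
    obtain ⟨-, rfl, rfl, -⟩ := hy
    rfl

theorem card_baseEqSpoke_le (hsymm : ∀ i j, a i j = a j i) :
    #{x ∈ wedges n a ×ˢ wedges n a |
        let ((_, j, k), (i', _, k')) := x; j = k' ∧ k = i'} ≤ kStars n a 3 := by
  refine (card_le_card_of_injOn (t := starTriples n a)
    (fun ((i, j, k), (_, j', _)) => (k, j', j, i)) ?_ ?_).trans card_starTriples_le
  · rintro ⟨⟨i, j, k⟩, ⟨i', j', k'⟩⟩ hx
    simp only [mem_coe, mem_filter, mem_product, mem_wedges] at hx
    obtain ⟨⟨⟨hjk, hki, -, hik⟩, ⟨hjk', -, hij', hik'⟩⟩, rfl, rfl⟩ := hx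
    exact mem_starTriples.2 ⟨hjk', hjk.trans hki, hij', hik', hsymm i k ▸ hik⟩
  · rintro ⟨⟨i, j, k⟩, ⟨i', j', k'⟩⟩ hx ⟨⟨l, m, o⟩, ⟨l', m', o'⟩⟩ hy h
    simp only [mem_coe, mem_filter] at hx hy
    simp only [Prod.mk.injEq] at h
    obtain ⟨rfl, rfl, rfl, rfl⟩ := h
    obtain ⟨-, rfl, rfl⟩ := hx
    obtain ⟨-, rfl, rfl⟩ := hy
    rfl

theorem card_spokeEqBase_le (hsymm : ∀ i j, a i j = a j i) :
    #{x ∈ wedges n a ×ˢ wedges n a |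
        let ((i, _, k), (_, j', k')) := x; k = j' ∧ i = k'} ≤ kStars n a 3 := by
  refine (card_le_card_of_injOn (t := starTriples n a)
    (fun ((i, j, k), (i', _, _)) => (i, j, k, i')) ?_ ?_).trans card_starTriples_le
  · rintro ⟨⟨i, j, k⟩, ⟨i', j', k'⟩⟩ hx
    simp only [mem_coe, mem_filter, mem_product, mem_wedges] at hx
    obtain ⟨⟨⟨hjk, hki, hij, hik⟩, ⟨-, hki', -, hik'⟩⟩, rfl, rfl⟩ := hx
    exact mem_starTriples.2 ⟨hjk, hki.trans hki', hij, hik, hsymm i' i ▸ hik'⟩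
  · rintro ⟨⟨i, j, k⟩, ⟨i', j', k'⟩⟩ hx ⟨⟨l, m, o⟩, ⟨l', m', o'⟩⟩ hy h
    simp only [mem_coe, mem_filter] at hx hy
    simp only [Prod.mk.injEq] at h
    obtain ⟨rfl, rfl, rfl, rfl⟩ := h
    obtain ⟨-, rfl, rfl⟩ := hx
    obtain ⟨-, rfl, rfl⟩ := hy
    rfl

theorem card_overlapping_wedges_le (hsymm : ∀ i j, a i j = a j i) :
    #{x ∈ (wedges n a).offDiag | ¬Disjoint (wedgeEdges x.1) (wedgeEdges x.2)}
      ≤ 2 * fourCycles n a + 4 * kStars n a 3 := by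
  have hsub : {x ∈ (wedges n a).offDiag | ¬Disjoint (wedgeEdges x.1) (wedgeEdges x.2)} ⊆
      {x ∈ wedges n a ×ˢ wedges n a |
          let ((i, j, k), (i', j', k')) := x; j = j' ∧ k = k' ∧ i ≠ i'} ∪
        {x ∈ wedges n a ×ˢ wedges n a |
          let ((i, j, k), (i', j', k')) := x; k = k' ∧ i = i' ∧ j ≠ j'} ∪
        {x ∈ wedges n a ×ˢ wedges n a |
          let ((_, j, k), (i', _, k')) := x; j = k' ∧ k = i'} ∪
        {x ∈ wedges n a ×ˢ wedges n a |
          let ((i, _, k), (_, j', k')) := x; k = j' ∧ i = k'} := by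
    rintro ⟨⟨i, j, k⟩, ⟨i', j', k'⟩⟩ hx
    simp only [mem_filter, mem_offDiag] at hx
    obtain ⟨⟨ht, ht', hne⟩, hov⟩ := hx
    simp only [mem_union, mem_filter, mem_product, ht, ht', true_and]
    grind [wedgeEdges_overlap_cases hov]
  grw [card_le_card hsub, card_union_le, card_union_le, card_union_le, card_sameBase_le hsymm,
    card_sameSpoke_le, card_baseEqSpoke_le hsymm, card_spokeEqBase_le hsymm]
  omega

end ARROneNS

theorem arronens_variance_le_general (n : ℕ) (a : Fin n → Fin n → Bool)
    (hsymm : ∀ i j, a i j = a j i)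
    (μ ρ : ℝ) (hμ0 : 0 ≤ μ) (hμ1 : μ ≤ 1) (hρ0 : 0 ≤ ρ) (hρ1 : ρ ≤ 1) :
    (∑ E' : OPair n → Bool,
        confProb n a μ ρ E' *
          (wSumOne n a μ ρ E'
            - ∑ E'' : OPair n → Bool,
                confProb n a μ ρ E'' * wSumOne n a μ ρ E'') ^ 2)
      ≤ 2 * (fourCycles n a : ℝ) * μ ^ 3 + 6 * (kStars n a 3 : ℝ) * μ ^ 3
        + (kStars n a 2 : ℝ) * μ ^ 2 := by
  have hconf : confProb n a μ ρ = bernoulliWeight (incProb n a μ ρ) := rfl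
  simp_rw [hconf, ARROneNS.wSumOne_eq]
  rw [variance_presentCount_sub]
  have hwedges : (#(ARROneNS.wedges n a) : ℝ) ≤ kStars n a 2 := by
    exact_mod_cast ARROneNS.card_wedges_le
  have hoverlap := ARROneNS.card_overlapping_wedges_le hsymm
  have hS₃ : (0 : ℝ) ≤ kStars n a 3 * μ ^ 3 := by positivity
  calc _ ≤ _ := sum_sum_prod_union_sub_le (ARROneNS.incProb_nonneg hμ0 hρ0)
          (ARROneNS.incProb_le hμ0 hρ1) hμ0 hμ1 (fun _ => ARROneNS.card_wedgeEdges)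
          ARROneNS.wedgeEdges_injOn
    _ ≤ kStars n a 2 * μ ^ 2 + ((2 * fourCycles n a + 4 * kStars n a 3 : ℕ) : ℝ) * μ ^ 3 := by
        gcongr
    _ ≤ _ := by push_cast; linarith

/-- Variance bound for `ARROneNS`:
`Var[Σᵢ wᵢ] ≤ 2 C₄ μ³ + 6 S₃ μ³ + S₂ μ²`. -/
theorem arronens_variance_le (n : ℕ) (a : Fin n → Fin n → Bool)
    (hsymm : ∀ i j, a i j = a j i) (hirrefl : ∀ i, a i i = false)
    (μ ρ : ℝ) (hμ0 : 0 ≤ μ) (hμ1 : μ ≤ 1) (hρ0 : 0 ≤ ρ) (hρ1 : ρ ≤ 1) :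
    (∑ E' : OPair n → Bool,
        confProb n a μ ρ E' *
          (wSumOne n a μ ρ E'
            - ∑ E'' : OPair n → Bool,
                confProb n a μ ρ E'' * wSumOne n a μ ρ E'') ^ 2)
      ≤ 2 * (fourCycles n a : ℝ) * μ ^ 3 + 6 * (kStars n a 3 : ℝ) * μ ^ 3
        + (kStars n a 2 : ℝ) * μ ^ 2 :=
  arronens_variance_le_general n a hsymm μ ρ hμ0 hμ1 hρ0 hρ1
end
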